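/- Weighted L^∞ bound for the size: let α > d. If I ∈ 𝒟_i with I ⊂ U and φ ∈ Φ_{i−m−2}^{4α}, then ‖ρ_I^{−α} (φ * f)‖_∞ ≤ C ‖ρ_U^{−α} f‖_∞ with C depending only on d and α. The key steps are ‖ρ_I^{−α}(φ * ρ_U^{α})‖_∞ ≤ C ‖ρ_I^{−α} ρ_U^{α}‖_∞ ≤ C. -/

import Mathlib

noncomputable section

/-- The concentric dilate `rI` of the axis-parallel cube with center `c` and
side length `l` (as a closed cube). -/
def dilCube {d : ℕ} (c : EuclideanSpace ℝ (Fin d)) (l r : ℝ) :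
    Set (EuclideanSpace ℝ (Fin d)) := {y | ∀ n, |y n - c n| ≤ r * l / 2}

/-- The mollified distance `ρ_I(y) = inf {r > 1 : y ∈ (2r−1)I}`. -/
def rho {d : ℕ} (c : EuclideanSpace ℝ (Fin d)) (l : ℝ) (y : EuclideanSpace ℝ (Fin d)) : ℝ :=
  sInf {r : ℝ | 1 < r ∧ y ∈ dilCube c l (2 * r - 1)}

/-- `ρ_I(F) = inf_{y ∈ F} ρ_I(y)`. -/
def rhoSet {d : ℕ} (c : EuclideanSpace ℝ (Fin d)) (l : ℝ)
    (F : Set (EuclideanSpace ℝ (Fin d))) : ℝ :=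
  sInf (rho c l '' F)

/-- The dyadic cube `Q_{j,k} = ∏_n [2^j k_n, 2^j (k_n + 1))`. -/
def dyadicCube {d : ℕ} (j : ℤ) (k : Fin d → ℤ) : Set (EuclideanSpace ℝ (Fin d)) :=
  {y | ∀ n, (2:ℝ)^j * k n ≤ y n ∧ y n < (2:ℝ)^j * (k n + 1)}

/-- The center of the dyadic cube `Q_{j,k}`. -/
def dyadicCenter {d : ℕ} (j : ℤ) (k : Fin d → ℤ) : EuclideanSpace ℝ (Fin d) :=
  WithLp.toLp 2 (fun n => (2:ℝ)^j * (k n + 1/2))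

/-- The mollified distance associated to the dyadic cube `Q_{j,k}`. -/
def rhoD {d : ℕ} (j : ℤ) (k : Fin d → ℤ) (y : EuclideanSpace ℝ (Fin d)) : ℝ :=
  rho (dyadicCenter j k) ((2:ℝ)^j) y

/-- `ρ_{Q_{j,k}}(F)`. -/
def rhoSetD {d : ℕ} (j : ℤ) (k : Fin d → ℤ) (F : Set (EuclideanSpace ℝ (Fin d))) : ℝ :=
  rhoSet (dyadicCenter j k) ((2:ℝ)^j) F

open MeasureTheory
open scoped ENNReal FourierTransform

/-- The class `Φ_j^{4α}`: continuous `φ` with `|φ| ≤ 2^{−dj} ρ_{[0,2^j]^d}^{−4α}`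
and `φ̂(ξ) = 0` for `|ξ| ≥ 2^{−j}`. -/
def memPhiClass {d : ℕ} (j : ℤ) (α : ℝ) (φ : EuclideanSpace ℝ (Fin d) → ℝ) : Prop :=
  Continuous φ ∧
  (∀ x, |φ x| ≤ 2 ^ (-(d:ℤ) * j) *
      (rho (WithLp.toLp 2 (fun _ => (2:ℝ)^j / 2)) ((2:ℝ)^j) x) ^ (-(4 * α))) ∧
  (∀ ξ : EuclideanSpace ℝ (Fin d), (2:ℝ) ^ (-j) ≤ ‖ξ‖ → 𝓕 (fun x => (φ x : ℂ)) ξ = 0)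

/- ### Auxiliary lemmas -/

lemma coord_le_norm {d : ℕ} (v : EuclideanSpace ℝ (Fin d)) (n : Fin d) : |v n| ≤ ‖v‖ := by
  rw [EuclideanSpace.norm_eq, ← Real.sqrt_sq_eq_abs]
  apply Real.sqrt_le_sqrt
  have h := Finset.single_le_sum (f := fun m => ‖v m‖ ^ 2) (fun m _ => sq_nonneg _)
    (Finset.mem_univ n)
  simpa [Real.norm_eq_abs, sq_abs] using h

lemma norm_le_sqrt_mul {d : ℕ} (v : EuclideanSpace ℝ (Fin d)) {s : ℝ} (hs : 0 ≤ s)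
    (h : ∀ n, |v n| ≤ s) : ‖v‖ ≤ Real.sqrt d * s := by
  rw [EuclideanSpace.norm_eq]
  have h1 : ∑ n, ‖v n‖ ^ 2 ≤ (d : ℝ) * s ^ 2 := by
    calc ∑ n, ‖v n‖ ^ 2 ≤ ∑ _n : Fin d, s ^ 2 := by
          refine Finset.sum_le_sum fun n _ => ?_
          rw [Real.norm_eq_abs]
          exact pow_le_pow_left₀ (abs_nonneg _) (h n) 2
      _ = (d : ℝ) * s ^ 2 := by simp [Finset.sum_const, Finset.card_univ]
  calc Real.sqrt (∑ n, ‖v n‖ ^ 2) ≤ Real.sqrt ((d : ℝ) * s ^ 2) := Real.sqrt_le_sqrt h1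
    _ = Real.sqrt d * s := by
        rw [Real.sqrt_mul (Nat.cast_nonneg d), Real.sqrt_sq hs]

lemma rho_eq {d : ℕ} [Nonempty (Fin d)] (c : EuclideanSpace ℝ (Fin d)) {l : ℝ} (hl : 0 < l)
    (y : EuclideanSpace ℝ (Fin d)) :
    rho c l y = max 1 ((⨆ n, |y n - c n|) / l + 1 / 2) := by
  have hbdd : BddAbove (Set.range fun n : Fin d => |y n - c n|) :=
    (Set.finite_range _).bddAbove
  set S : ℝ := ⨆ n, |y n - c n| with hS
  have key : ∀ r : ℝ, (S ≤ (2 * r - 1) * l / 2) ↔ S / l + 1 / 2 ≤ r := by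
    intro r
    rw [show (2 * r - 1) * l / 2 = (r - 1 / 2) * l by ring, ← div_le_iff₀ hl]
    constructor <;> intro <;> linarith
  have hset : {r : ℝ | 1 < r ∧ y ∈ dilCube c l (2 * r - 1)}
      = {r : ℝ | 1 < r ∧ S / l + 1 / 2 ≤ r} := by
    ext r
    simp only [Set.mem_setOf_eq, dilCube]
    refine and_congr_right fun _ => ?_
    rw [← key r]
    exact ⟨fun h => ciSup_le h,
      fun h n => (le_ciSup (f := fun n => |y n - c n|) hbdd n).trans h⟩
  rw [rho, hset]
  rcases le_or_gt (S / l + 1 / 2) 1 with hM | hM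
  · have : {r : ℝ | 1 < r ∧ S / l + 1 / 2 ≤ r} = Set.Ioi 1 := by
      ext r
      exact ⟨fun h => h.1, fun h => ⟨h, hM.trans h.le⟩⟩
    rw [this, csInf_Ioi, max_eq_left hM]
  · have : {r : ℝ | 1 < r ∧ S / l + 1 / 2 ≤ r} = Set.Ici (S / l + 1 / 2) := by
      ext r
      exact ⟨fun h => h.2, fun h => ⟨lt_of_lt_of_le hM h, h⟩⟩
    rw [this, csInf_Ici, max_eq_right hM.le]

lemma one_le_rho {d : ℕ} [Nonempty (Fin d)] (c : EuclideanSpace ℝ (Fin d)) {l : ℝ} (hl : 0 < l)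
    (y : EuclideanSpace ℝ (Fin d)) : 1 ≤ rho c l y := by
  rw [rho_eq c hl y]; exact le_max_left _ _

lemma iSup_abs_nonneg {d : ℕ} [Nonempty (Fin d)] (g : Fin d → ℝ) :
    0 ≤ ⨆ n, |g n| := by
  obtain ⟨n⟩ := ‹Nonempty (Fin d)›
  exact (abs_nonneg (g n)).trans
    (le_ciSup (f := fun n => |g n|) ((Set.finite_range _).bddAbove) n)

set_option maxHeartbeats 1000000 in
/-- Weighted `L^∞` bound for the size: if `I ∈ 𝒟_i`, `I ⊆ U = [0,1)^d` and
`φ ∈ Φ_{i−m−2}^{4α}`, then `‖ρ_I^{−α}(φ * f)‖_∞ ≤ C ‖ρ_U^{−α} f‖_∞`, `C = C(d,α)`. -/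
theorem weighted_linfty_size_bound (d : ℕ) (hd : 1 ≤ d) (α : ℝ) (hα : (d:ℝ) < α) :
    ∃ C > (0:ℝ), ∀ (i : ℤ), i ≤ 0 → ∀ (m : ℕ) (kI : Fin d → ℤ),
      dyadicCube i kI ⊆ dyadicCube 0 (fun _ => (0:ℤ)) →
      ∀ (φ f : EuclideanSpace ℝ (Fin d) → ℝ),
      memPhiClass (i - m - 2) α φ →
      Measurable f →
      eLpNorm (fun x => (rhoD 0 (fun _ => (0:ℤ)) x) ^ (-α) * f x) ⊤ volume < ⊤ →
      eLpNorm (fun x => (rhoD i kI x) ^ (-α) * ∫ y, φ (x - y) * f y) ⊤ volume ≤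
        ENNReal.ofReal C *
          eLpNorm (fun x => (rhoD 0 (fun _ => (0:ℤ)) x) ^ (-α) * f x) ⊤ volume := by
  haveI : Nonempty (Fin d) := Fin.pos_iff_nonempty.mp hd
  have hd1 : (1:ℝ) ≤ d := by exact_mod_cast hd
  have hα0 : 0 < α := lt_of_le_of_lt (Nat.cast_nonneg d) hα
  set sd := Real.sqrt d with hsd
  have hsd1 : 1 ≤ sd := by
    rw [hsd, show (1:ℝ) = Real.sqrt 1 by simp]
    exact Real.sqrt_le_sqrt hd1
  have hsd0 : 0 < sd := lt_of_lt_of_le one_pos hsd1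
  set K := ∫ u : EuclideanSpace ℝ (Fin d), (1 + ‖u‖) ^ (-(3 * α)) with hKdef
  have hKint : Integrable (fun u : EuclideanSpace ℝ (Fin d) => (1 + ‖u‖) ^ (-(3 * α))) := by
    apply integrable_one_add_norm
    rw [finrank_euclideanSpace_fin]
    linarith
  have hK0 : 0 ≤ K := integral_nonneg fun u => Real.rpow_nonneg (by positivity) _
  set B0 : ℝ := (2 * sd) ^ (4 * α) with hB0def
  have hB0pos : 0 < B0 := Real.rpow_pos_of_pos (by linarith) _
  refine ⟨B0 * (K + 1), by positivity, ?_⟩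
  intro i hi m kI hsub φ f hφ hfmeas hN
  set j : ℤ := i - m - 2 with hjdef
  set t : ℝ := (2:ℝ) ^ j with htdef
  set l : ℝ := (2:ℝ) ^ i with hldef
  have ht : 0 < t := zpow_pos (by norm_num) _
  have hl : 0 < l := zpow_pos (by norm_num) _
  have htl : t ≤ l := zpow_le_zpow_right₀ (by norm_num) (by omega)
  have hl1 : l ≤ 1 := by
    calc l ≤ (2:ℝ) ^ (0:ℤ) := zpow_le_zpow_right₀ (by norm_num) hi
      _ = 1 := zpow_zero 2
  set Ne := eLpNorm (fun x => (rhoD 0 (fun _ => (0:ℤ)) x) ^ (-α) * f x) ⊤ volume with hNedef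
  set N : ℝ := Ne.toReal with hNdef
  have hNe : Ne ≠ ⊤ := hN.ne
  have hN0 : 0 ≤ N := ENNReal.toReal_nonneg
  have hU2 : (0:ℝ) < (2:ℝ) ^ (0:ℤ) := by norm_num
  have hUpos : ∀ y : EuclideanSpace ℝ (Fin d), 0 < rhoD 0 (fun _ => (0:ℤ)) y :=
    fun y => lt_of_lt_of_le one_pos (one_le_rho _ hU2 y)
  -- a.e. bound on f
  have hfae : ∀ᵐ y : EuclideanSpace ℝ (Fin d), |f y| ≤ N * (rhoD 0 (fun _ => (0:ℤ)) y) ^ α := by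
    have h1 := enorm_ae_le_eLpNormEssSup
      (fun x => (rhoD 0 (fun _ => (0:ℤ)) x) ^ (-α) * f x) volume
    filter_upwards [h1] with y hy
    have hy2 : ((‖(rhoD 0 (fun _ => (0:ℤ)) y) ^ (-α) * f y‖₊ : ℝ≥0∞)) ≤ Ne := by
      rw [hNedef, eLpNorm_exponent_top]; exact hy
    have hy3 : |(rhoD 0 (fun _ => (0:ℤ)) y) ^ (-α) * f y| ≤ N := by
      have h4 := ENNReal.toReal_mono hNe hy2
      rwa [ENNReal.coe_toReal, coe_nnnorm, Real.norm_eq_abs] at h4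
    set ρ := rhoD 0 (fun _ => (0:ℤ)) y with hρ
    have hρ0 : 0 < ρ := hUpos y
    have hid : |f y| = ρ ^ α * |ρ ^ (-α) * f y| := by
      rw [abs_mul, ← mul_assoc, abs_of_pos (Real.rpow_pos_of_pos hρ0 _),
        ← Real.rpow_add hρ0, add_neg_cancel, Real.rpow_zero, one_mul]
    rw [hid, mul_comm (ρ ^ α)]
    exact mul_le_mul_of_nonneg_right hy3 (Real.rpow_nonneg hρ0.le α)
  -- corner facts from the inclusion
  have hk0 : ∀ n, (0:ℝ) ≤ l * kI n := by
    intro n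
    have hp : (WithLp.toLp 2 (fun n => l * kI n) : EuclideanSpace ℝ (Fin d)) ∈ dyadicCube i kI := by
      intro n'
      refine ⟨le_rfl, ?_⟩
      have h1 : (kI n' : ℝ) < kI n' + 1 := by linarith
      exact mul_lt_mul_of_pos_left h1 hl
    have h2 := (hsub hp n).1
    simpa using h2
  have hk1 : ∀ n, l * ((kI n : ℝ) + 1) ≤ 1 := by
    intro n
    by_contra hcon
    push_neg at hcon
    set q : EuclideanSpace ℝ (Fin d) :=
      WithLp.toLp 2 (fun n' => if n' = n then max (l * kI n) 1 else l * kI n') with hq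
    have hqmem : q ∈ dyadicCube i kI := by
      intro n'
      by_cases h : n' = n
      · subst h
        simp only [hq, PiLp.toLp_apply, if_pos rfl]
        constructor
        · exact le_max_left _ _
        · apply max_lt
          · exact mul_lt_mul_of_pos_left (by linarith) hl
          · exact hcon
      · simp only [hq, PiLp.toLp_apply, if_neg h]
        exact ⟨le_rfl, mul_lt_mul_of_pos_left (by linarith) hl⟩
    have h2 := (hsub hqmem n).2
    simp only [hq, PiLp.toLp_apply, if_pos rfl, if_true] at h2
    have h1 : (1:ℝ) ≤ max (l * kI n) 1 := le_max_right _ _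
    simp only [Int.cast_zero, zpow_zero, one_mul, mul_zero, zero_add, mul_one] at h2
    linarith
  -- center bound
  have hcenter : ∀ n, |dyadicCenter i kI n - 1/2| ≤ (1 - l) / 2 := by
    intro n
    have h0 := hk0 n
    have h1 := hk1 n
    have hc : dyadicCenter i kI n = l * kI n + l / 2 := by
      show l * ((kI n : ℝ) + 1/2) = _
      ring
    rw [hc, abs_le]
    constructor <;> nlinarith
  -- formula for rho_I
  have hIform : ∀ y : EuclideanSpace ℝ (Fin d),
      rhoD i kI y = max 1 ((⨆ n, |y n - dyadicCenter i kI n|) / l + 1/2) := fun y => by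
    rw [rhoD, rho_eq _ hl]
  -- rho_U ≤ rho_I
  have hUI : ∀ y : EuclideanSpace ℝ (Fin d),
      rhoD 0 (fun _ => (0:ℤ)) y ≤ rhoD i kI y := by
    intro y
    have hUy : rhoD 0 (fun _ => (0:ℤ)) y = max 1 ((⨆ n, |y n - 1/2|) + 1/2) := by
      rw [rhoD, rho_eq _ hU2]
      norm_num [dyadicCenter]
    rw [hUy, hIform y]
    set SU : ℝ := ⨆ n, |y n - 1/2| with hSU
    set SI : ℝ := ⨆ n, |y n - dyadicCenter i kI n| with hSI
    have hSI0 : 0 ≤ SI := iSup_abs_nonneg _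
    have hSUle : SU ≤ SI + (1 - l)/2 := by
      refine ciSup_le fun n => ?_
      calc |y n - 1/2| ≤ |y n - dyadicCenter i kI n| + |dyadicCenter i kI n - 1/2| :=
            abs_sub_le _ _ _
        _ ≤ SI + (1 - l)/2 :=
            add_le_add (le_ciSup (f := fun n => |y n - dyadicCenter i kI n|)
              ((Set.finite_range _).bddAbove) n) (hcenter n)
    apply max_le (le_max_left _ _)
    rcases le_total SI (l/2) with h | h
    · refine le_trans ?_ (le_max_left _ _)
      linarith
    · refine le_trans ?_ (le_max_right _ _)
      have h3 : SI / l - SI = SI * (1 - l) / l := by field_simp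
      have h4 : (l/2) * (1 - l) / l ≤ SI * (1 - l) / l := by
        gcongr
      have h5 : (l/2) * (1 - l) / l = (1 - l)/2 := by field_simp
      linarith
  -- Lipschitz bound for rho_I
  have hLip : ∀ x y : EuclideanSpace ℝ (Fin d),
      rhoD i kI y ≤ rhoD i kI x + ‖x - y‖ / l := by
    intro x y
    rw [hIform x, hIform y]
    set SIx : ℝ := ⨆ n, |x n - dyadicCenter i kI n| with hSIx
    set SIy : ℝ := ⨆ n, |y n - dyadicCenter i kI n| with hSIy
    have hnn : 0 ≤ ‖x - y‖ / l := div_nonneg (norm_nonneg _) hl.le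
    have hSle : SIy ≤ SIx + ‖x - y‖ := by
      refine ciSup_le fun n => ?_
      have h1 : |y n - dyadicCenter i kI n| ≤ |y n - x n| + |x n - dyadicCenter i kI n| :=
        abs_sub_le _ _ _
      have h2 : |y n - x n| ≤ ‖x - y‖ := by
        have h3 := coord_le_norm (x - y) n
        rw [PiLp.sub_apply] at h3
        rw [abs_sub_comm]
        exact h3
      have h3 : |x n - dyadicCenter i kI n| ≤ SIx :=
        le_ciSup (f := fun n => |x n - dyadicCenter i kI n|) ((Set.finite_range _).bddAbove) n
      linarith
    apply max_le
    · exact le_add_of_le_of_nonneg (le_max_left _ _) hnn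
    · have h4 : SIy / l ≤ (SIx + ‖x - y‖) / l := by gcongr
      rw [add_div] at h4
      have h5 := le_max_right 1 (SIx / l + 1/2)
      linarith
  -- pointwise kernel bound
  have hφbd : ∀ z : EuclideanSpace ℝ (Fin d),
      |φ z| ≤ 2 ^ (-(d:ℤ) * j) * (B0 * (1 + ‖z‖ / t) ^ (-(4 * α))) := by
    intro z
    refine (hφ.2.1 z).trans ?_
    refine mul_le_mul_of_nonneg_left ?_ (by positivity)
    have h1z : (0:ℝ) < 1 + ‖z‖ / t := by positivity
    rw [rho_eq _ ht z]
    set S : ℝ := ⨆ n, |z n - (fun _ : Fin d => t / 2) n| with hSdef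
    have hSnn : 0 ≤ S := iSup_abs_nonneg _
    have hlb : (1 + ‖z‖ / t) / (2 * sd) ≤ max 1 (S / t + 1/2) := by
      have hcoord : ∀ n, |z n| ≤ S + t/2 := by
        intro n
        have h1 : |z n - t/2| ≤ S :=
          le_ciSup (f := fun n => |z n - (fun _ : Fin d => t / 2) n|)
            ((Set.finite_range _).bddAbove) n
        calc |z n| = |(z n - t/2) + t/2| := by ring_nf
          _ ≤ |z n - t/2| + |t/2| := abs_add_le _ _
          _ ≤ S + t/2 := by
              rw [abs_of_pos (by positivity : (0:ℝ) < t/2)]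
              exact add_le_add_left h1 _
      have hnorm : ‖z‖ ≤ sd * (S + t/2) := norm_le_sqrt_mul z (by positivity) hcoord
      have hb : ‖z‖ / t ≤ sd * (S/t) + sd / 2 := by
        rw [div_le_iff₀ ht]
        calc ‖z‖ ≤ sd * (S + t/2) := hnorm
          _ = (sd * (S/t) + sd/2) * t := by field_simp
      set a := S / t with ha
      have ha0 : 0 ≤ a := div_nonneg hSnn ht.le
      rcases le_total a (1/2) with hc | hc
      · refine le_trans ?_ (le_max_left _ _)
        rw [div_le_one (by positivity)]
        nlinarith [mul_le_mul_of_nonneg_left hc hsd0.le]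
      · refine le_trans ?_ (le_max_right _ _)
        rw [div_le_iff₀ (by positivity)]
        nlinarith [mul_le_mul_of_nonneg_right hsd1 ha0]
    calc (max 1 (S / t + 1/2)) ^ (-(4 * α))
        ≤ ((1 + ‖z‖ / t) / (2 * sd)) ^ (-(4 * α)) := by
          apply Real.rpow_le_rpow_of_nonpos (by positivity) hlb
          nlinarith
      _ = B0 * (1 + ‖z‖ / t) ^ (-(4 * α)) := by
          rw [div_eq_mul_inv, Real.mul_rpow h1z.le (by positivity),
            Real.inv_rpow (by positivity),
            Real.rpow_neg (by positivity : (0:ℝ) ≤ 2 * sd) (4 * α), inv_inv, hB0def]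
          ring
  -- integrability of the profile
  have hPint : Integrable (fun z : EuclideanSpace ℝ (Fin d) => (1 + ‖z‖ / t) ^ (-(3 * α))) := by
    have h2 := hKint.comp_smul (R := t⁻¹) (inv_ne_zero ht.ne')
    have heq : (fun z : EuclideanSpace ℝ (Fin d) => (1 + ‖t⁻¹ • z‖) ^ (-(3 * α)))
        = fun z : EuclideanSpace ℝ (Fin d) => (1 + ‖z‖ / t) ^ (-(3 * α)) := by
      funext z
      rw [norm_smul, Real.norm_eq_abs, abs_of_pos (inv_pos.mpr ht), inv_mul_eq_div]
    rwa [heq] at h2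
  have hPval : (∫ z : EuclideanSpace ℝ (Fin d), (1 + ‖z‖ / t) ^ (-(3 * α)))
      = t ^ (d:ℕ) * K := by
    have h2 := MeasureTheory.Measure.integral_comp_smul (μ := volume)
      (f := fun u : EuclideanSpace ℝ (Fin d) => (1 + ‖u‖) ^ (-(3 * α))) t⁻¹
    rw [finrank_euclideanSpace_fin] at h2
    have heq : (fun z : EuclideanSpace ℝ (Fin d) => (1 + ‖t⁻¹ • z‖) ^ (-(3 * α)))
        = fun z : EuclideanSpace ℝ (Fin d) => (1 + ‖z‖ / t) ^ (-(3 * α)) := by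
      funext z
      rw [norm_smul, Real.norm_eq_abs, abs_of_pos (inv_pos.mpr ht), inv_mul_eq_div]
    simp only [heq] at h2
    rw [h2, smul_eq_mul, ← inv_pow, inv_inv, abs_of_pos (pow_pos ht _)]
  have hpow : (2:ℝ) ^ (-(d:ℤ) * j) * t ^ (d:ℕ) = 1 := by
    rw [htdef, ← zpow_natCast ((2:ℝ) ^ j) d, ← zpow_mul,
      ← zpow_add₀ (two_ne_zero : (2:ℝ) ≠ 0)]
    have hzero : -(d:ℤ) * j + j * (d:ℤ) = 0 := by ring
    rw [hzero, zpow_zero]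
  -- the main pointwise bound
  have hmain : ∀ x : EuclideanSpace ℝ (Fin d),
      ‖(rhoD i kI x) ^ (-α) * ∫ y, φ (x - y) * f y‖ ≤ B0 * (K + 1) * N := by
    intro x
    set r := rhoD i kI x with hr
    have hr1 : (1:ℝ) ≤ r := one_le_rho _ hl x
    have hr0 : 0 < r := lt_of_lt_of_le one_pos hr1
    set A : ℝ := (2:ℝ) ^ (-(d:ℤ) * j) * B0 with hA
    have hA0 : (0:ℝ) ≤ A := by positivity
    have hdom : ∀ᵐ y : EuclideanSpace ℝ (Fin d),
        ‖φ (x - y) * f y‖ ≤ (N * A * r ^ α) * (1 + ‖x - y‖ / t) ^ (-(3 * α)) := by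
      filter_upwards [hfae] with y hy
      set s := ‖x - y‖ / t with hs
      have hs0 : 0 ≤ s := div_nonneg (norm_nonneg _) ht.le
      have h1s : (0:ℝ) < 1 + s := by positivity
      have hρU : rhoD 0 (fun _ => (0:ℤ)) y ≤ r * (1 + s) := by
        calc rhoD 0 (fun _ => (0:ℤ)) y ≤ rhoD i kI y := hUI y
          _ ≤ r + ‖x - y‖ / l := hLip x y
          _ ≤ r + s := by
              have h6 : ‖x - y‖ / l ≤ ‖x - y‖ / t :=
                div_le_div_of_nonneg_left (norm_nonneg _) ht htl
              linarith
          _ ≤ r * (1 + s) := by nlinarith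
      have hρUα : (rhoD 0 (fun _ => (0:ℤ)) y) ^ α ≤ r ^ α * (1 + s) ^ α := by
        rw [← Real.mul_rpow hr0.le h1s.le]
        exact Real.rpow_le_rpow (hUpos y).le hρU hα0.le
      have h1 : |φ (x - y)| ≤ A * (1 + s) ^ (-(4 * α)) := by
        calc |φ (x - y)| ≤ 2 ^ (-(d:ℤ) * j) * (B0 * (1 + s) ^ (-(4 * α))) := hφbd (x - y)
          _ = A * (1 + s) ^ (-(4 * α)) := by rw [hA]; ring
      have h2 : |f y| ≤ N * (r ^ α * (1 + s) ^ α) :=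
        hy.trans (mul_le_mul_of_nonneg_left hρUα hN0)
      have hmul : |φ (x - y) * f y|
          ≤ (A * (1 + s) ^ (-(4 * α))) * (N * (r ^ α * (1 + s) ^ α)) := by
        rw [abs_mul]
        exact mul_le_mul h1 h2 (abs_nonneg _) (by positivity)
      rw [Real.norm_eq_abs]
      refine hmul.trans (le_of_eq ?_)
      have hQT : (1 + s) ^ (-(4 * α)) * (1 + s) ^ α = (1 + s) ^ (-(3 * α)) := by
        rw [← Real.rpow_add h1s, show -(4 * α) + α = -(3 * α) by ring]
      calc (A * (1 + s) ^ (-(4 * α))) * (N * (r ^ α * (1 + s) ^ α))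
          = (N * A * r ^ α) * ((1 + s) ^ (-(4 * α)) * (1 + s) ^ α) := by ring
        _ = (N * A * r ^ α) * (1 + s) ^ (-(3 * α)) := by rw [hQT]
    have hgint : Integrable (fun y : EuclideanSpace ℝ (Fin d) =>
        (N * A * r ^ α) * (1 + ‖x - y‖ / t) ^ (-(3 * α))) :=
      (hPint.comp_sub_left x).const_mul _
    have hint1 : |∫ y, φ (x - y) * f y| ≤ (N * A * r ^ α) * (t ^ (d:ℕ) * K) := by
      calc |∫ y, φ (x - y) * f y| ≤ ∫ y, ‖φ (x - y) * f y‖ := by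
            rw [← Real.norm_eq_abs]
            exact norm_integral_le_integral_norm _
        _ ≤ ∫ y, (N * A * r ^ α) * (1 + ‖x - y‖ / t) ^ (-(3 * α)) :=
            integral_mono_of_nonneg (Filter.Eventually.of_forall fun y => norm_nonneg _)
              hgint hdom
        _ = (N * A * r ^ α) * ∫ y, (1 + ‖x - y‖ / t) ^ (-(3 * α)) := integral_const_mul _ _
        _ = (N * A * r ^ α) * (t ^ (d:ℕ) * K) := by
            rw [integral_sub_left_eq_self
              (fun z : EuclideanSpace ℝ (Fin d) => (1 + ‖z‖ / t) ^ (-(3 * α))) volume x, hPval]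
    rw [Real.norm_eq_abs, abs_mul, abs_of_pos (Real.rpow_pos_of_pos hr0 _)]
    calc r ^ (-α) * |∫ y, φ (x - y) * f y|
        ≤ r ^ (-α) * ((N * A * r ^ α) * (t ^ (d:ℕ) * K)) :=
          mul_le_mul_of_nonneg_left hint1 (Real.rpow_nonneg hr0.le _)
      _ = (r ^ (-α) * r ^ α) * (N * ((2:ℝ) ^ (-(d:ℤ) * j) * t ^ (d:ℕ)) * B0 * K) := by
          rw [hA]; ring
      _ = N * B0 * K := by
          rw [← Real.rpow_add hr0, neg_add_cancel, Real.rpow_zero, hpow]; ring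
      _ ≤ B0 * (K + 1) * N := by nlinarith
  -- conclude
  have hbound := eLpNorm_le_of_ae_bound (μ := volume) (p := ⊤)
    (f := fun x => (rhoD i kI x) ^ (-α) * ∫ y, φ (x - y) * f y)
    (Filter.Eventually.of_forall hmain)
  refine le_trans hbound ?_
  rw [show ((⊤:ℝ≥0∞).toReal)⁻¹ = 0 by simp, ENNReal.rpow_zero, one_mul,
    ENNReal.ofReal_mul (by positivity), hNdef, ENNReal.ofReal_toReal hNe]
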